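/- arXiv:2303.07175 — 4 statements merged into one kernel-verified Lean document; each statement's English description precedes it below -/
import Mathlib

section
/- Under the hypotheses of the previous B-function setting, if there exists u* ∈ X with DE(u*) = 0, then every global saddle point (ū, ξ̄) satisfies R*(−DE(ū)) = 0 and B(ū, ξ̄) = 0; if additionally R* is strictly convex, then ξ̄ = 0 and DE(ū) = 0. -/
/-- Zero lemma: if `Rs` is strictly convex, nonneg, `Rs 0 = 0`, and `Rs ξ = 0`, then `ξ = 0`. -/
lemma zero_of_strictConvex {V : Type*} [AddCommGroup V] [Module ℝ V]
    (Rs : V → ℝ) (hpos : ∀ ξ, 0 ≤ Rs ξ) (h0 : Rs 0 = 0)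
    (hsc : StrictConvexOn ℝ Set.univ Rs) {ξ : V} (hξ : Rs ξ = 0) : ξ = 0 := by
  by_contra hne
  have h := hsc.2 (Set.mem_univ ξ) (Set.mem_univ 0) hne
    (show (0:ℝ) < 1/2 by norm_num) (show (0:ℝ) < 1/2 by norm_num) (by norm_num)
  rw [hξ, h0] at h
  simp only [smul_zero, add_zero, mul_zero] at h
  exact absurd h (not_lt.mpr (hpos _))

/-- If there is an equilibrium `u*` with `DE u* = 0`, then every global saddle
point `(ū, ξ̄)` of the B-function `B(u,ξ) = R*(ξ) - R*(-DE u)` satisfies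
`R*(-DE ū) = 0` and `B(ū, ξ̄) = 0`; if moreover `R*` is strictly convex then
`ξ̄ = 0` and `DE ū = 0`. -/
theorem stmt6 {X : Type*} [NormedAddCommGroup X] [NormedSpace ℝ X]
    (E : X → ℝ) (DE : X → (X →L[ℝ] ℝ)) (hE : ∀ u, HasFDerivAt E (DE u) u)
    (Rs : (X →L[ℝ] ℝ) → ℝ) (hconv : ConvexOn ℝ Set.univ Rs)
    (hlsc : LowerSemicontinuous Rs) (h0 : Rs 0 = 0) (hpos : ∀ ξ, 0 ≤ Rs ξ)
    (hstar : ∃ us : X, DE us = 0)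
    (ub : X) (ξb : X →L[ℝ] ℝ)
    (hsaddle : ∀ (u : X) (ξ : X →L[ℝ] ℝ),
        Rs ξb - Rs (-(DE u)) ≤ Rs ξb - Rs (-(DE ub)) ∧
        Rs ξb - Rs (-(DE ub)) ≤ Rs ξ - Rs (-(DE ub))) :
    Rs (-(DE ub)) = 0 ∧ Rs ξb - Rs (-(DE ub)) = 0 ∧
      (StrictConvexOn ℝ Set.univ Rs → ξb = 0 ∧ DE ub = 0) := by
  obtain ⟨us, hus⟩ := hstar
  have h1 := (hsaddle us ξb).1
  rw [hus] at h1
  simp only [neg_zero, h0] at h1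
  have hRub : Rs (-(DE ub)) = 0 := le_antisymm (by linarith) (hpos _)
  have h2 := (hsaddle ub 0).2
  rw [h0, hRub] at h2
  have hRξb : Rs ξb = 0 := le_antisymm (by linarith) (hpos _)
  refine ⟨hRub, by rw [hRub, hRξb]; ring, fun hsc => ?_⟩
  have hξ : ξb = 0 := zero_of_strictConvex Rs hpos h0 hsc hRξb
  have hD : -(DE ub) = 0 := zero_of_strictConvex Rs hpos h0 hsc hRub
  exact ⟨hξ, by simpa using neg_eq_zero.mp hD⟩
end

section
/- Let K : Y × Y* → ℝ and E : Y → ℝ differentiable. Then K admits a 'BER structure', i.e. K(y,η) = R*(y,η) − R*(y, −DE(y)) for some family of dual dissipation potentials R*(y,·) : Y* → [0,∞) that are convex and vanish at 0, if and only if: (a) K(y,η) ≥ K(y,0) for all (y,η), (b) K(y,·) is convex for each y, and (c) K(y, −DE(y)) = 0 for all y. In that case R*(y,η) = K(y,η) − K(y,0). -/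
/-- A function `K : Y × Y* → ℝ` has a BER structure
`K(y,η) = R*(y,η) - R*(y, -DE y)` with dual dissipation potentials
`R*(y,·)` (convex, nonnegative, vanishing at `0`) iff
(a) `K(y,0) ≤ K(y,η)`, (b) `K(y,·)` is convex, (c) `K(y,-DE y) = 0`;
and in that case `R*(y,η) = K(y,η) - K(y,0)` is such a family. -/
theorem stmt7 {Y : Type*} [NormedAddCommGroup Y] [NormedSpace ℝ Y]
    (K : Y → (Y →L[ℝ] ℝ) → ℝ) (E : Y → ℝ) (DE : Y → (Y →L[ℝ] ℝ))
    (hE : ∀ y, HasFDerivAt E (DE y) y) :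
    ((∃ Rs : Y → (Y →L[ℝ] ℝ) → ℝ,
        (∀ y, ConvexOn ℝ Set.univ (Rs y)) ∧ (∀ y, Rs y 0 = 0) ∧
        (∀ y η, 0 ≤ Rs y η) ∧
        (∀ y η, K y η = Rs y η - Rs y (-(DE y)))) ↔
      ((∀ y η, K y 0 ≤ K y η) ∧ (∀ y, ConvexOn ℝ Set.univ (K y)) ∧
        (∀ y, K y (-(DE y)) = 0))) ∧
    (((∀ y η, K y 0 ≤ K y η) ∧ (∀ y, ConvexOn ℝ Set.univ (K y)) ∧
        (∀ y, K y (-(DE y)) = 0)) →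
      ((∀ y, ConvexOn ℝ Set.univ (fun η => K y η - K y 0)) ∧
       (∀ y, K y (0 : Y →L[ℝ] ℝ) - K y 0 = 0) ∧
       (∀ y η, 0 ≤ K y η - K y 0) ∧
       (∀ y η, K y η = (K y η - K y 0) - (K y (-(DE y)) - K y 0)))) := by
  constructor
  · constructor
    · rintro ⟨Rs, hconv, h0, hnn, heq⟩
      refine ⟨fun y η => ?_, fun y => ?_, fun y => ?_⟩
      · rw [heq y 0, heq y η, h0 y]
        linarith [hnn y η]
      · have : K y = fun η => Rs y η - Rs y (-(DE y)) := funext (heq y)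
        rw [this]
        exact (hconv y).sub (concaveOn_const _ convex_univ)
      · rw [heq y (-(DE y))]; ring
    · rintro ⟨ha, hb, hc⟩
      refine ⟨fun y η => K y η - K y 0, fun y => ?_, fun y => by ring,
        fun y η => by dsimp only; linarith [ha y η],
        fun y η => by dsimp only; linarith [ha y (-(DE y)), hc y]⟩
      exact (hb y).sub (concaveOn_const _ convex_univ)
  · rintro ⟨ha, hb, hc⟩
    refine ⟨fun y => (hb y).sub (concaveOn_const _ convex_univ),
      fun y => by ring, fun y η => by linarith [ha y η],
      fun y η => by linarith [hc y]⟩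
end

section
/- For positive reals g, h and ρ ∈ ℝ, the infimum over ζ ∈ ℝ of g·C*(ζ) + h·C*(ρ − ζ), where C*(z) = 4 cosh(z/2) − 4, equals 4W(g,h,ρ) − 4(g+h) with W(g,h,ρ) = ((g+h)² + (g h / 2)·C*(ρ))^{1/2}. -/
/-- The cosh-type dual dissipation function `C*(z) = 4 cosh(z/2) - 4`. -/
noncomputable def Cstar (z : ℝ) : ℝ := 4 * Real.cosh (z / 2) - 4

lemma exp_half_log {X : ℝ} (hX : 0 < X) :
    Real.exp (Real.log X / 2) = Real.sqrt X := by
  have h2 : (Real.exp (Real.log X / 2)) ^ 2 = X := by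
    rw [sq, ← Real.exp_add]
    rw [show Real.log X / 2 + Real.log X / 2 = Real.log X by ring, Real.exp_log hX]
  calc Real.exp (Real.log X / 2)
      = Real.sqrt ((Real.exp (Real.log X / 2)) ^ 2) :=
        (Real.sqrt_sq (Real.exp_pos _).le).symm
    _ = Real.sqrt X := by rw [h2]

/-- `inf_ζ (g C*(ζ) + h C*(ρ - ζ)) = 4 W(g,h,ρ) - 4 (g+h)` with
`W(g,h,ρ) = ((g+h)² + (g h / 2) C*(ρ))^{1/2}`. -/
theorem stmt9 (g h ρ : ℝ) (hg : 0 < g) (hh : 0 < h) :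
    (⨅ ζ : ℝ, (g * Cstar ζ + h * Cstar (ρ - ζ))) =
      4 * Real.sqrt ((g + h) ^ 2 + g * h / 2 * Cstar ρ) - 4 * (g + h) := by
  set A := g + h * Real.exp (-(ρ / 2)) with hA
  set B := g + h * Real.exp (ρ / 2) with hB
  have hApos : 0 < A := by positivity
  have hBpos : 0 < B := by positivity
  have hAB : (g + h) ^ 2 + g * h / 2 * Cstar ρ = A * B := by
    simp only [Cstar, Real.cosh_eq, hA, hB, Real.exp_neg]
    have he := (Real.exp_pos (ρ / 2)).ne'
    field_simp
    ring
  have key : ∀ ζ : ℝ, g * Cstar ζ + h * Cstar (ρ - ζ) =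
      2 * (A * Real.exp (ζ / 2) + B * Real.exp (-(ζ / 2))) - 4 * (g + h) := by
    intro ζ
    simp only [Cstar, Real.cosh_eq, hA, hB]
    rw [show (ρ - ζ) / 2 = ρ / 2 + -(ζ / 2) by ring, Real.exp_add,
        show -(ρ / 2 + -(ζ / 2)) = -(ρ / 2) + ζ / 2 by ring, Real.exp_add]
    ring
  have hs : Real.sqrt ((g + h) ^ 2 + g * h / 2 * Cstar ρ)
      = Real.sqrt A * Real.sqrt B := by
    rw [hAB, Real.sqrt_mul hApos.le]
  have hsa : Real.sqrt A * Real.sqrt A = A := Real.mul_self_sqrt hApos.le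
  have hsb : Real.sqrt B * Real.sqrt B = B := Real.mul_self_sqrt hBpos.le
  have lb : ∀ ζ : ℝ, 4 * (Real.sqrt A * Real.sqrt B) - 4 * (g + h)
      ≤ g * Cstar ζ + h * Cstar (ρ - ζ) := by
    intro ζ
    rw [key]
    have hu : 0 < Real.exp (ζ / 2) := Real.exp_pos _
    have huv : Real.exp (ζ / 2) * Real.exp (-(ζ / 2)) = 1 := by
      rw [← Real.exp_add]; simp
    set u := Real.exp (ζ / 2) with hu'
    set v := Real.exp (-(ζ / 2)) with hv'
    have huuv : u * u * v = u := by rw [mul_assoc, huv, mul_one]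
    have hid : A * u + B * v - 2 * (Real.sqrt A * Real.sqrt B)
        = (Real.sqrt A * u - Real.sqrt B) ^ 2 * v := by
      have : (Real.sqrt A * u - Real.sqrt B) ^ 2 * v
          = Real.sqrt A * Real.sqrt A * (u * u * v)
            - 2 * (Real.sqrt A * Real.sqrt B) * (u * v)
            + Real.sqrt B * Real.sqrt B * v := by ring
      rw [this, hsa, hsb, huuv, huv, mul_one]
      ring
    have hnn : 0 ≤ (Real.sqrt A * u - Real.sqrt B) ^ 2 * v :=
      mul_nonneg (sq_nonneg _) (Real.exp_pos _).le
    linarith [hid ▸ hnn]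
  set ζ₀ := Real.log B - Real.log A with hζ₀
  have e1 : Real.exp (ζ₀ / 2) = Real.sqrt B / Real.sqrt A := by
    rw [show ζ₀ / 2 = Real.log B / 2 - Real.log A / 2 by rw [hζ₀]; ring,
        Real.exp_sub, exp_half_log hApos, exp_half_log hBpos]
  have e2 : Real.exp (-(ζ₀ / 2)) = Real.sqrt A / Real.sqrt B := by
    rw [show -(ζ₀ / 2) = Real.log A / 2 - Real.log B / 2 by rw [hζ₀]; ring,
        Real.exp_sub, exp_half_log hApos, exp_half_log hBpos]
  have hsa0 : Real.sqrt A ≠ 0 := by positivity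
  have hsb0 : Real.sqrt B ≠ 0 := by positivity
  have val : g * Cstar ζ₀ + h * Cstar (ρ - ζ₀)
      = 4 * (Real.sqrt A * Real.sqrt B) - 4 * (g + h) := by
    rw [key, e1, e2]
    field_simp
    nlinarith [hsa, hsb]
  have bdd : BddBelow (Set.range fun ζ : ℝ => g * Cstar ζ + h * Cstar (ρ - ζ)) := by
    refine ⟨4 * (Real.sqrt A * Real.sqrt B) - 4 * (g + h), ?_⟩
    rintro x ⟨ζ, rfl⟩
    exact lb ζ
  rw [hs]
  apply le_antisymm
  · calc (⨅ ζ : ℝ, (g * Cstar ζ + h * Cstar (ρ - ζ)))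
        ≤ g * Cstar ζ₀ + h * Cstar (ρ - ζ₀) := ciInf_le bdd ζ₀
      _ = _ := val
  · exact le_ciInf lb
end

section
/- Let a, b, c, a*, b*, c* > 0, κ₁, κ₂ > 0, and define κ_eff(a) = κ₁κ₂a*/(κ₁a* + κ₂a). Setting g(w) = κ₁(abw/(a*b*w*))^{1/2} and h(w) = κ₂(acw/(a*c*w*))^{1/2} for w, w* > 0, the supremum over w > 0 of 4((g(w)+h(w))² + (g(w)h(w)/2)C*(ρ))^{1/2} − 2κ₁(ab/(a*b*) + w/w*) − 2κ₂(c/c* + aw/(a*w*)) equals κ_eff(a)·(a²bc/(a*²b*c*))^{1/2}·C*(ρ) − 2κ_eff(a)·((a²b/(a*²b*))^{1/2} − (c/c*)^{1/2})², where C*(z) = 4cosh(z/2) − 4. -/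
set_option maxHeartbeats 1000000

/-- The supremum over `w > 0` in the reduction of the two binary reactions
to the ternary reaction, yielding the effective coefficient
`κ_eff(a) = κ₁κ₂a*/(κ₁a* + κ₂a)`. -/
theorem stmt11 (a b c as bs cs ws κ₁ κ₂ ρ : ℝ)
    (ha : 0 < a) (hb : 0 < b) (hc : 0 < c) (has : 0 < as) (hbs : 0 < bs)
    (hcs : 0 < cs) (hws : 0 < ws) (hκ₁ : 0 < κ₁) (hκ₂ : 0 < κ₂) :
    (⨆ w : {w : ℝ // 0 < w},
      (4 * Real.sqrt ((κ₁ * Real.sqrt (a * b * w.1 / (as * bs * ws))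
            + κ₂ * Real.sqrt (a * c * w.1 / (as * cs * ws))) ^ 2
          + (κ₁ * Real.sqrt (a * b * w.1 / (as * bs * ws)))
            * (κ₂ * Real.sqrt (a * c * w.1 / (as * cs * ws))) / 2 * Cstar ρ)
        - 2 * κ₁ * (a * b / (as * bs) + w.1 / ws)
        - 2 * κ₂ * (c / cs + a * w.1 / (as * ws)))) =
      κ₁ * κ₂ * as / (κ₁ * as + κ₂ * a)
          * Real.sqrt (a ^ 2 * b * c / (as ^ 2 * bs * cs)) * Cstar ρ
        - 2 * (κ₁ * κ₂ * as / (κ₁ * as + κ₂ * a))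
          * (Real.sqrt (a ^ 2 * b / (as ^ 2 * bs)) - Real.sqrt (c / cs)) ^ 2 := by
  have hch : (0:ℝ) < Real.cosh (ρ/2) := Real.cosh_pos _
  have hane : a ≠ 0 := ha.ne'
  have hasne : as ≠ 0 := has.ne'
  have hbsne : bs ≠ 0 := hbs.ne'
  have hcsne : cs ≠ 0 := hcs.ne'
  have hwsne : ws ≠ 0 := hws.ne'
  set X := Real.sqrt (a ^ 2 * b / (as ^ 2 * bs)) with hXdef
  set Y := Real.sqrt (c / cs) with hYdef
  set Z := Real.sqrt (a ^ 2 * b * c / (as ^ 2 * bs * cs)) with hZdef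
  set P := Real.sqrt (a * b / (as * bs)) with hPdef
  set Q := Real.sqrt (a * c / (as * cs)) with hQdef
  have hP : 0 < P := Real.sqrt_pos.2 (by positivity)
  have hQ : 0 < Q := Real.sqrt_pos.2 (by positivity)
  have hP2 : P ^ 2 = a * b / (as * bs) := Real.sq_sqrt (by positivity)
  have hQ2 : Q ^ 2 = a * c / (as * cs) := Real.sq_sqrt (by positivity)
  have hX2 : X ^ 2 = a ^ 2 * b / (as ^ 2 * bs) := Real.sq_sqrt (by positivity)
  have hY2 : Y ^ 2 = c / cs := Real.sq_sqrt (by positivity)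
  have hPQ : P * Q = X * Y := by
    rw [hPdef, hQdef, hXdef, hYdef, ← Real.sqrt_mul (by positivity),
      ← Real.sqrt_mul (by positivity)]
    congr 1
    field_simp
  have hZXY : Z = X * Y := by
    rw [hZdef, hXdef, hYdef, ← Real.sqrt_mul (by positivity)]
    congr 1
    field_simp
  clear_value X Y Z P Q
  set D := κ₁ + κ₂ * a / as with hDdef
  have hD : 0 < D := by positivity
  clear_value D
  have hDne : D ≠ 0 := hD.ne'
  set E := κ₁^2 * P^2 + κ₂^2 * Q^2 + 2*κ₁*κ₂*(P*Q)*Real.cosh (ρ/2) with hEdef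
  clear_value E
  have hE : 0 < E := by
    rw [hEdef]
    nlinarith [mul_pos (mul_pos (mul_pos hκ₁ hκ₂) (mul_pos hP hQ)) hch,
      mul_pos hκ₁ hP, mul_pos hκ₂ hQ, sq_nonneg (κ₁*P), sq_nonneg (κ₂*Q)]
  set M := Real.sqrt E with hMdef
  have hM : 0 < M := Real.sqrt_pos.2 hE
  have hM2 : M ^ 2 = E := Real.sq_sqrt hE.le
  clear_value M
  set K := 2*κ₁*(a*b/(as*bs)) + 2*κ₂*(c/cs) with hKdef
  clear_value K
  have key : ∀ w : ℝ, 0 < w →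
      4 * Real.sqrt ((κ₁ * Real.sqrt (a * b * w / (as * bs * ws))
            + κ₂ * Real.sqrt (a * c * w / (as * cs * ws))) ^ 2
          + (κ₁ * Real.sqrt (a * b * w / (as * bs * ws)))
            * (κ₂ * Real.sqrt (a * c * w / (as * cs * ws))) / 2 * Cstar ρ)
        - 2 * κ₁ * (a * b / (as * bs) + w / ws)
        - 2 * κ₂ * (c / cs + a * w / (as * ws))
      = 4 * M * Real.sqrt (w / ws) - 2 * D * (w / ws) - K := by
    intro w hw
    have hwne : w ≠ 0 := hw.ne'
    have hs : (0:ℝ) ≤ Real.sqrt (w/ws) := Real.sqrt_nonneg _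
    have h1 : Real.sqrt (a * b * w / (as * bs * ws)) = P * Real.sqrt (w / ws) := by
      rw [hPdef, ← Real.sqrt_mul (by positivity)]
      congr 1
      field_simp
    have h2 : Real.sqrt (a * c * w / (as * cs * ws)) = Q * Real.sqrt (w / ws) := by
      rw [hQdef, ← Real.sqrt_mul (by positivity)]
      congr 1
      field_simp
    rw [h1, h2]
    have h3 : (κ₁ * (P * Real.sqrt (w/ws)) + κ₂ * (Q * Real.sqrt (w/ws)))^2
        + (κ₁ * (P * Real.sqrt (w/ws))) * (κ₂ * (Q * Real.sqrt (w/ws))) / 2 * Cstar ρ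
        = E * Real.sqrt (w/ws) ^ 2 := by
      simp only [Cstar, hEdef]
      ring
    rw [h3, Real.sqrt_mul hE.le, ← hMdef, Real.sqrt_sq hs, hDdef, hKdef]
    field_simp
    ring
  set V := 2 * E / D - K with hVdef
  clear_value V
  have hub : ∀ w : ℝ, 0 < w →
      4 * M * Real.sqrt (w/ws) - 2*D*(w/ws) - K ≤ V := by
    intro w hw
    have hs : 0 ≤ Real.sqrt (w/ws) := Real.sqrt_nonneg _
    have hs2 : Real.sqrt (w/ws) ^ 2 = w / ws := Real.sq_sqrt (by positivity)
    set s := Real.sqrt (w/ws) with hsdef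
    clear_value s
    rw [← hs2, hVdef]
    have heq : 2*E/D - (4*M*s - 2*D*s^2) = 2*(D*s - M)^2/D := by
      rw [← hM2]
      field_simp
      ring
    have hge : 0 ≤ 2*(D*s - M)^2/D := div_nonneg (by positivity) hD.le
    linarith
  set w₀ : ℝ := ws * (M/D)^2 with hw₀def
  have hw₀ : 0 < w₀ := by rw [hw₀def]; exact mul_pos hws (pow_pos (div_pos hM hD) 2)
  clear_value w₀
  have hs₀ : Real.sqrt (w₀/ws) = M/D := by
    rw [hw₀def, show ws*(M/D)^2/ws = (M/D)^2 from by field_simp,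
      Real.sqrt_sq (div_nonneg hM.le hD.le)]
  have hf₀ : 4*M*Real.sqrt (w₀/ws) - 2*D*(w₀/ws) - K = V := by
    rw [hs₀, hw₀def, hVdef, ← hM2]
    field_simp
    ring
  have e1 : a * b / (as * bs) = as / a * X ^ 2 := by
    rw [hX2]; field_simp
  have e2 : a * c / (as * cs) = a / as * Y ^ 2 := by
    rw [hY2]; field_simp
  have e3 : c / cs = Y ^ 2 := hY2.symm
  have hVR : V = κ₁ * κ₂ * as / (κ₁ * as + κ₂ * a) * Z * Cstar ρ
      - 2 * (κ₁ * κ₂ * as / (κ₁ * as + κ₂ * a)) * (X - Y) ^ 2 := by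
    rw [hVdef, hEdef, hKdef, hDdef, hPQ, hZXY, hP2, hQ2, e1, e2, e3]
    simp only [Cstar]
    have hden : κ₁ * as + κ₂ * a ≠ 0 := by positivity
    field_simp
    ring
  rw [← hVR]
  refine le_antisymm (ciSup_le fun w => ?_)
    (le_ciSup_of_le ⟨V, ?_⟩ (⟨w₀, hw₀⟩ : {w : ℝ // 0 < w}) ?_)
  · rw [key w.1 w.2]
    exact hub w.1 w.2
  · rintro x ⟨w, rfl⟩
    dsimp only
    rw [key w.1 w.2]
    exact hub w.1 w.2
  · show V ≤ _
    dsimp only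
    rw [key w₀ hw₀]
    exact hf₀.ge
end
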